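/- A labelling Lab of a finite abstract argumentation framework is complete (i.e., an argument is IN iff all its attackers are OUT, and OUT iff at least one attacker is IN) if and only if the set of IN-labelled arguments is a complete extension and the set of OUT-labelled arguments equals the set of arguments attacked by some IN-labelled argument. -/
import Mathlib


namespace AAF3

inductive Label | IN | OUT | UNDEC
deriving DecidableEq

def completeLab {A : Type*} (R : A → A → Prop) (Lab : A → Label) : Prop :=
  ∀ x, (Lab x = Label.IN ↔ ∀ y, R y x → Lab y = Label.OUT) ∧
       (Lab x = Label.OUT ↔ ∃ y, R y x ∧ Lab y = Label.IN)

def conflictFree {A : Type*} (R : A → A → Prop) (S : Set A) : Prop :=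
  ∀ x ∈ S, ∀ y ∈ S, ¬ R x y

def acceptable {A : Type*} (R : A → A → Prop) (S : Set A) (x : A) : Prop :=
  ∀ y, R y x → ∃ z ∈ S, R z y

def completeExt {A : Type*} (R : A → A → Prop) (S : Set A) : Prop :=
  conflictFree R S ∧ (∀ x ∈ S, acceptable R S x) ∧ (∀ x, acceptable R S x → x ∈ S)

theorem completeLab_iff {A : Type*} [Fintype A] (R : A → A → Prop) (Lab : A → Label) :
    completeLab R Lab ↔
      (completeExt R {x | Lab x = Label.IN} ∧
        {x | Lab x = Label.OUT} = {x | ∃ y, Lab y = Label.IN ∧ R y x}) := by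
  constructor
  · intro h
    refine ⟨⟨?_, ?_, ?_⟩, ?_⟩
    · intro x hx y hy hR
      have := ((h y).1.mp hy) x hR
      rw [hx] at this; exact Label.noConfusion this
    · intro x hx y hyx
      have hOut := ((h x).1.mp hx) y hyx
      obtain ⟨z, hz, hzIN⟩ := (h y).2.mp hOut
      exact ⟨z, hzIN, hz⟩
    · intro x hacc
      apply (h x).1.mpr
      intro y hyx
      obtain ⟨z, hzIN, hzy⟩ := hacc y hyx
      exact (h y).2.mpr ⟨z, hzy, hzIN⟩
    · ext x
      constructor
      · intro hx
        obtain ⟨y, hyx, hyIN⟩ := (h x).2.mp hx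
        exact ⟨y, hyIN, hyx⟩
      · rintro ⟨y, hyIN, hyx⟩
        exact (h x).2.mpr ⟨y, hyx, hyIN⟩
  · rintro ⟨⟨hcf, hacc, hcomp⟩, hOut⟩
    intro x
    have out_iff : ∀ z, Lab z = Label.OUT ↔ ∃ y, R y z ∧ Lab y = Label.IN := by
      intro z
      constructor
      · intro hz
        have : z ∈ {x | ∃ y, Lab y = Label.IN ∧ R y x} := hOut ▸ hz
        obtain ⟨y, hyIN, hyz⟩ := this
        exact ⟨y, hyz, hyIN⟩
      · rintro ⟨y, hyz, hyIN⟩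
        have : z ∈ {x | ∃ y, Lab y = Label.IN ∧ R y x} := ⟨y, hyIN, hyz⟩
        rw [← hOut] at this; exact this
    refine ⟨⟨?_, ?_⟩, out_iff x⟩
    · intro hx y hyx
      obtain ⟨z, hzIN, hzy⟩ := hacc x hx y hyx
      exact (out_iff y).mpr ⟨z, hzy, hzIN⟩
    · intro hall
      apply hcomp
      intro y hyx
      obtain ⟨z, hzy, hzIN⟩ := (out_iff y).mp (hall y hyx)
      exact ⟨z, hzIN, hzy⟩

end AAF3
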